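/- arXiv:2401.06737 — 3 statements merged into one kernel-verified Lean document; each statement's English description precedes it below -/
import Mathlib

section
/- Let K be a field of characteristic zero containing elements q (with q not a root of unity) and t^{1/2}, and let V(X) = (t^{1/2} X - t^{-1/2} X⁻¹)/(X - X⁻¹) as a rational function. Define operators on K(X): x̂(f) = (X + X⁻¹) f, ŷ(f) = V(X) f(qX) + V(X⁻¹) f(q⁻¹X), ẑ(f) = q^{-1/2} X⁻¹ V(X) f(qX) + q^{-1/2} X V(X⁻¹) f(q⁻¹X). Then q^{1/2} x̂ ŷ - q^{-1/2} ŷ x̂ = (q - q⁻¹) ẑ as operators on K(X). -/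
/-!
`ŷ` multiplies the shifts `ϖ f` and `ϖ⁻¹ f` by the coefficients `V` and `V'`; moving `x̂`
past them turns `X + X⁻¹` into `qX + q⁻¹X⁻¹` resp. `q⁻¹X + qX⁻¹`.
With the weights `p = q^{1/2}` and `p⁻¹`, the `X`-terms in front of `ϖ f` and the `X⁻¹`-terms
in front of `ϖ⁻¹ f` cancel because `p⁻¹ q = p`, and what remains is `(q - q⁻¹) ẑ`.
-/

namespace AlgEquiv

variable {K L : Type*} [Field K] [Field L] [Algebra K L]

theorem symm_apply_eq_mul_of_apply_eq_mul (ϖ : L ≃ₐ[K] L) {X : L} {c : K} (hc : c ≠ 0)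
    (h : ϖ X = algebraMap K L c * X) : ϖ.symm X = algebraMap K L c⁻¹ * X := by
  rw [ϖ.symm_apply_eq, map_mul, commutes, h, ← mul_assoc, ← map_mul, inv_mul_cancel₀ hc,
    map_one, one_mul]

theorem apply_add_inv_of_apply_eq_mul (ϖ : L ≃ₐ[K] L) {X : L} {c : K}
    (h : ϖ X = algebraMap K L c * X) :
    ϖ (X + X⁻¹) = algebraMap K L c * X + (algebraMap K L c)⁻¹ * X⁻¹ := by
  rw [map_add, map_inv₀, h, mul_inv]

end AlgEquiv

theorem daha_A1_relation_xy_general (K L : Type*) [Field K] [Field L] [Algebra K L]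
    (q p : K) (hq : q ≠ 0) (hp : p ^ 2 = q)
    (X : L)
    (ϖ : L ≃ₐ[K] L) (hϖX : ϖ X = algebraMap K L q * X)
    (V V' : L)
    (xop yop zop : L → L)
    (hx : ∀ f, xop f = (X + X⁻¹) * f)
    (hy : ∀ f, yop f = V * ϖ f + V' * ϖ.symm f)
    (hz : ∀ f, zop f = (algebraMap K L p)⁻¹ * X⁻¹ * V * ϖ f
      + (algebraMap K L p)⁻¹ * X * V' * ϖ.symm f) :
    ∀ f : L,
      algebraMap K L p * xop (yop f) - (algebraMap K L p)⁻¹ * yop (xop f)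
        = (algebraMap K L q - (algebraMap K L q)⁻¹) * zop f := by
  intro f
  have hϖ := ϖ.apply_add_inv_of_apply_eq_mul hϖX
  have hϖsymm :=
    ϖ.symm.apply_add_inv_of_apply_eq_mul (ϖ.symm_apply_eq_mul_of_apply_eq_mul hq hϖX)
  rw [hx, hy, hy, hx, hz, map_mul, map_mul, hϖ, hϖsymm, map_inv₀, inv_inv, ← hp, map_pow]
  linear_combination -(X + X⁻¹) * (V * ϖ f + V' * ϖ.symm f) * inv_mul_mul_self (algebraMap K L p)

/-- The polynomial-representation operators `x̂, ŷ, ẑ` of the spherical DAHA of type `A₁`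
on the function field `K(X)` (an abstract field `L` with automorphism `ϖ : X ↦ qX`)
satisfy `q^{1/2} x̂ŷ - q^{-1/2} ŷx̂ = (q - q⁻¹) ẑ`. -/
theorem daha_A1_relation_xy (K L : Type*) [Field K] [CharZero K] [Field L] [Algebra K L]
    (q s p : K) (hq : q ≠ 0) (hs : s ≠ 0)
    (hqroot : ∀ n : ℕ, 0 < n → q ^ n ≠ 1) (hp : p ^ 2 = q)
    (X : L) (hX : X ≠ 0)
    (ϖ : L ≃ₐ[K] L) (hϖX : ϖ X = algebraMap K L q * X)
    (V V' : L)
    (hV : V = (algebraMap K L s * X - (algebraMap K L s)⁻¹ * X⁻¹) / (X - X⁻¹))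
    (hV' : V' = (algebraMap K L s * X⁻¹ - (algebraMap K L s)⁻¹ * X) / (X⁻¹ - X))
    (xop yop zop : L → L)
    (hx : ∀ f, xop f = (X + X⁻¹) * f)
    (hy : ∀ f, yop f = V * ϖ f + V' * ϖ.symm f)
    (hz : ∀ f, zop f = (algebraMap K L p)⁻¹ * X⁻¹ * V * ϖ f
      + (algebraMap K L p)⁻¹ * X * V' * ϖ.symm f) :
    ∀ f : L,
      algebraMap K L p * xop (yop f) - (algebraMap K L p)⁻¹ * yop (xop f)
        = (algebraMap K L q - (algebraMap K L q)⁻¹) * zop f :=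
  daha_A1_relation_xy_general K L q p hq hp X ϖ hϖX V V' xop yop zop hx hy hz
end

section
/- With the operators x̂, ŷ, ẑ on K(X) as above (x̂ = multiplication by X + X⁻¹, ŷ = V(X)ϖ + V(X⁻¹)ϖ⁻¹, ẑ = q^{-1/2}X⁻¹V(X)ϖ + q^{-1/2}XV(X⁻¹)ϖ⁻¹, where ϖ(f)(X) = f(qX)), one has q^{1/2} ẑ x̂ - q^{-1/2} x̂ ẑ = (q - q⁻¹) ŷ. -/
/-!
Split `ẑ` into its `ϖ` half `q^{-1/2} X⁻¹ V ϖ` and its `ϖ⁻¹` half `q^{-1/2} X V' ϖ⁻¹`.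
Since `ϖ (X + X⁻¹) = q X + q⁻¹ X⁻¹`, each half satisfies the relation on its own:
`X⁻¹ (q X + q⁻¹ X⁻¹) - q⁻¹ (X + X⁻¹) X⁻¹ = q - q⁻¹`.
The `ϖ⁻¹` half is the `ϖ` half with `X` replaced by `X⁻¹`, because `ϖ⁻¹ X⁻¹ = q X⁻¹`.
-/

theorem map_mul_add_inv_twisted_commutator {F L : Type*} [Field L] [FunLike F L L]
    [RingHomClass F L L] (σ : F) {P Y : L} (hP : P ≠ 0) (hY : Y ≠ 0)
    (hσY : σ Y = P ^ 2 * Y) (v f : L) :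
    P * (P⁻¹ * Y⁻¹ * v * σ ((Y + Y⁻¹) * f)) - P⁻¹ * ((Y + Y⁻¹) * (P⁻¹ * Y⁻¹ * v * σ f))
      = (P ^ 2 - (P ^ 2)⁻¹) * (v * σ f) := by
  rw [map_mul, map_add, map_inv₀, hσY]
  field_simp
  ring

theorem AlgEquiv.symm_apply_inv_of_apply_eq_algebraMap_mul {K L : Type*} [Field K] [Field L]
    [Algebra K L] (σ : L ≃ₐ[K] L) {c : K} (hc : c ≠ 0) {X : L}
    (hσX : σ X = algebraMap K L c * X) :
    σ.symm X⁻¹ = algebraMap K L c * X⁻¹ := by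
  have hc' : algebraMap K L c ≠ 0 := (map_ne_zero _).mpr hc
  apply σ.injective
  rw [AlgEquiv.apply_symm_apply, map_mul, map_inv₀, σ.commutes, hσX, mul_inv,
    mul_inv_cancel_left₀ hc']

theorem daha_A1_relation_zx_general (K L : Type*) [Field K] [Field L] [Algebra K L]
    (q p : K) (hq : q ≠ 0) (hp : p ^ 2 = q)
    (X : L) (hX : X ≠ 0)
    (ϖ : L ≃ₐ[K] L) (hϖX : ϖ X = algebraMap K L q * X)
    (V V' : L)
    (xop yop zop : L → L)
    (hx : ∀ f, xop f = (X + X⁻¹) * f)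
    (hy : ∀ f, yop f = V * ϖ f + V' * ϖ.symm f)
    (hz : ∀ f, zop f = (algebraMap K L p)⁻¹ * X⁻¹ * V * ϖ f
      + (algebraMap K L p)⁻¹ * X * V' * ϖ.symm f) :
    ∀ f : L,
      algebraMap K L p * zop (xop f) - (algebraMap K L p)⁻¹ * xop (zop f)
        = (algebraMap K L q - (algebraMap K L q)⁻¹) * yop f := by
  intro f
  have hP : algebraMap K L p ≠ 0 :=
    (map_ne_zero _).mpr (ne_zero_pow two_ne_zero (hp ▸ hq))
  have hq_eq : algebraMap K L q = algebraMap K L p ^ 2 := by rw [← hp, map_pow]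
  have hϖ : ϖ X = algebraMap K L p ^ 2 * X := by rw [hϖX, hq_eq]
  have hϖsymm : ϖ.symm X⁻¹ = algebraMap K L p ^ 2 * X⁻¹ := by
    rw [ϖ.symm_apply_inv_of_apply_eq_algebraMap_mul hq hϖX, hq_eq]
  have hforward := map_mul_add_inv_twisted_commutator ϖ hP hX hϖ V f
  have hbackward := map_mul_add_inv_twisted_commutator ϖ.symm hP (inv_ne_zero hX) hϖsymm V' f
  rw [inv_inv, add_comm X⁻¹ X] at hbackward
  rw [hx, hx, hz, hz, hy, hq_eq]
  linear_combination hforward + hbackward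

/-- The polynomial-representation operators `x̂, ŷ, ẑ` of the spherical DAHA of type `A₁`
on the function field `K(X)` (an abstract field `L` with automorphism `ϖ : X ↦ qX`)
satisfy `q^{1/2} ẑx̂ - q^{-1/2} x̂ẑ = (q - q⁻¹) ŷ`. -/
theorem daha_A1_relation_zx (K L : Type*) [Field K] [CharZero K] [Field L] [Algebra K L]
    (q s p : K) (hq : q ≠ 0) (hs : s ≠ 0)
    (hqroot : ∀ n : ℕ, 0 < n → q ^ n ≠ 1) (hp : p ^ 2 = q)
    (X : L) (hX : X ≠ 0)
    (ϖ : L ≃ₐ[K] L) (hϖX : ϖ X = algebraMap K L q * X)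
    (V V' : L)
    (hV : V = (algebraMap K L s * X - (algebraMap K L s)⁻¹ * X⁻¹) / (X - X⁻¹))
    (hV' : V' = (algebraMap K L s * X⁻¹ - (algebraMap K L s)⁻¹ * X) / (X⁻¹ - X))
    (xop yop zop : L → L)
    (hx : ∀ f, xop f = (X + X⁻¹) * f)
    (hy : ∀ f, yop f = V * ϖ f + V' * ϖ.symm f)
    (hz : ∀ f, zop f = (algebraMap K L p)⁻¹ * X⁻¹ * V * ϖ f
      + (algebraMap K L p)⁻¹ * X * V' * ϖ.symm f) :
    ∀ f : L,
      algebraMap K L p * zop (xop f) - (algebraMap K L p)⁻¹ * xop (zop f)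
        = (algebraMap K L q - (algebraMap K L q)⁻¹) * yop f :=
  daha_A1_relation_zx_general K L q p hq hp X hX ϖ hϖX V V' xop yop zop hx hy hz
end

section
/- Define for each integer n the operator ĝₙ = q^{-n/2} X^{-n} V(X) ϖ + q^{-n/2} X^{n} V(X⁻¹) ϖ⁻¹ on K(X), where V(X) = (t^{1/2}X - t^{-1/2}X⁻¹)/(X - X⁻¹) and ϖ(f)(X) = f(qX). Then for every n ∈ ℤ, letting x̂ denote multiplication by X + X⁻¹, one has x̂ ĝₙ = q^{-1/2} ĝ_{n-1} + q^{1/2} ĝ_{n+1}. -/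
/-- For the operators `ĝₙ = q^{-n/2}X^{-n}V(X)ϖ + q^{-n/2}XⁿV(X⁻¹)ϖ⁻¹` on `K(X)`
(an abstract field `L` with automorphism `ϖ : X ↦ qX`), one has the recursion
`x̂ ĝₙ = q^{-1/2} ĝ_{n-1} + q^{1/2} ĝ_{n+1}` where `x̂` is multiplication by `X + X⁻¹`. -/
theorem daha_A1_curve_recursion (K L : Type*) [Field K] [CharZero K] [Field L] [Algebra K L]
    (q s p : K) (hq : q ≠ 0) (hs : s ≠ 0) (hp : p ^ 2 = q)
    (X : L) (hX : X ≠ 0)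
    (ϖ : L ≃ₐ[K] L) (hϖX : ϖ X = algebraMap K L q * X)
    (V V' : L)
    (hV : V = (algebraMap K L s * X - (algebraMap K L s)⁻¹ * X⁻¹) / (X - X⁻¹))
    (hV' : V' = (algebraMap K L s * X⁻¹ - (algebraMap K L s)⁻¹ * X) / (X⁻¹ - X))
    (g : ℤ → L → L)
    (hg : ∀ (n : ℤ) (f : L),
      g n f = (algebraMap K L p) ^ (-n) * X ^ (-n) * V * ϖ f
        + (algebraMap K L p) ^ (-n) * X ^ n * V' * ϖ.symm f) :
    ∀ (n : ℤ) (f : L),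
      (X + X⁻¹) * g n f = (algebraMap K L p)⁻¹ * g (n - 1) f + algebraMap K L p * g (n + 1) f := by
  intro n f
  have hpK : p ≠ 0 := by
    rintro rfl
    rw [zero_pow (by norm_num)] at hp
    exact hq hp.symm
  have hpL : (algebraMap K L p) ≠ 0 := by
    simpa using hpK
  have h1 : (-(n - 1)) = -n + 1 := by ring
  have h2 : (-(n + 1)) = -n - 1 := by ring
  rw [hg, hg, hg, h1, h2, zpow_add_one₀ hpL, zpow_sub_one₀ hpL, zpow_add_one₀ hX,
    zpow_sub_one₀ hX, zpow_add_one₀ hX, zpow_sub_one₀ hX]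
  simp only [zpow_neg]
  set a := algebraMap K L p with ha
  set A := a ^ n with hA
  set B := X ^ n with hB
  have hA0 : A ≠ 0 := zpow_ne_zero _ hpL
  have hB0 : B ≠ 0 := zpow_ne_zero _ hX
  field_simp
  ring
end
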